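/- For all α, β in I^cf_λ, the product satisfies d̄(αβ) − r̄(αβ) = (d̄(α) − r̄(α)) + (d̄(β) − r̄(β)), where the differences are taken in the integers. -/

import Mathlib

/-!
Write `X = λ ∖ ran α` and `Y = λ ∖ dom β`. A point lies outside `dom (αβ)` either because it is
outside `dom α`, or because `α` sends it into `Y`; `α` maps the latter points bijectively onto
`Y ∖ X`, so `d̄(αβ) = d̄(α) + |Y ∖ X|`, and symmetrically `r̄(αβ) = r̄(β) + |X ∖ Y|`. Since
`d̄(β) = |X ∩ Y| + |Y ∖ X|` and `r̄(α) = |X ∩ Y| + |X ∖ Y|`, the identity follows.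
-/

open Function Set

namespace IcfPaper

variable {ι : Type*}

lemma trans_none_finite {f g : ι ≃. ι}
    (hf : {a | f a = none}.Finite) (hg : {b | g b = none}.Finite) :
    {a | (f.trans g) a = none}.Finite := by
  have hsub : {a | (f.trans g) a = none} ⊆
      {a | f a = none} ∪ ⋃ b ∈ {b | g b = none}, {a | f.symm b = some a} := by
    intro a ha
    simp only [Set.mem_setOf_eq] at ha
    rcases hfa : f a with _ | b
    · exact Or.inl hfa
    · have hg' : g b = none := by
        have : (f.trans g) a = (f a).bind g := rfl
        rw [this, hfa, Option.bind_some] at ha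
        exact ha
      refine Or.inr ?_
      refine Set.mem_biUnion hg' ?_
      exact (PEquiv.eq_some_iff f).2 hfa
  refine Set.Finite.subset (hf.union (hg.biUnion ?_)) hsub
  intro b _
  apply Set.Subsingleton.finite
  intro a1 h1 a2 h2
  simp only [Set.mem_setOf_eq] at h1 h2
  rw [h1] at h2
  exact Option.some_injective _ h2

/-- The monoid of injective partial selfmaps of `ι` with cofinite domain and range. -/
def Icf (ι : Type*) : Type _ :=
  {f : ι ≃. ι // {a | f a = none}.Finite ∧ {b | f.symm b = none}.Finite}

namespace Icf

instance : Monoid (Icf ι) where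
  mul f g := ⟨f.1.trans g.1, trans_none_finite f.2.1 g.2.1, by
      rw [PEquiv.symm_trans_rev]
      exact trans_none_finite g.2.2 f.2.2⟩
  one := ⟨PEquiv.refl ι, by
      constructor <;>
      · convert Set.finite_empty
        ext a
        simp only [Set.mem_setOf_eq, Set.mem_empty_iff_false, iff_false]
        intro h
        exact Option.some_ne_none a h⟩
  mul_assoc a b c := Subtype.ext (PEquiv.trans_assoc _ _ _)
  one_mul a := Subtype.ext (PEquiv.refl_trans _)
  mul_one a := Subtype.ext (PEquiv.trans_refl _)

/-- The domain of an element of `Icf ι`. -/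
def dom (f : Icf ι) : Set ι := {a | (f.1 a).isSome}

/-- The range of an element of `Icf ι`. -/
def ran (f : Icf ι) : Set ι := {b | (f.1.symm b).isSome}

/-- `d̄ f`, the number of points of `ι` outside of the domain of `f`. -/
noncomputable def dbar (f : Icf ι) : ℕ := (dom f)ᶜ.ncard

/-- `r̄ f`, the number of points of `ι` outside of the range of `f`. -/
noncomputable def rbar (f : Icf ι) : ℕ := (ran f)ᶜ.ncard

end Icf

/-- The bicyclic semigroup `⟨p, q | pq = 1⟩`, realized as `ℕ × ℕ` with the operation
`(a,b)(c,d) = (a - b + max(b,c), d - c + max(b,c))`. -/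
def Bicyclic : Type := ℕ × ℕ

instance : Mul Bicyclic :=
  ⟨fun x y => (x.1 - x.2 + max x.2 y.1, y.2 - y.1 + max x.2 y.1)⟩

section PEquiv

variable {α β γ : Type*}

theorem _root_.PEquiv.setOf_trans_eq_none (f : α ≃. β) (g : β ≃. γ) :
    {a | f.trans g a = none} = {a | f a = none} ∪ f ⁻¹' (some '' {b | g b = none}) := by
  ext a
  rcases hfa : f a with _ | b <;> simp [PEquiv.trans, hfa]

theorem _root_.PEquiv.injOn_preimage_image_some (f : α ≃. β) (t : Set β) :
    InjOn f (f ⁻¹' (some '' t)) := by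
  rintro a₁ ⟨b, -, h₁⟩ a₂ - h
  exact f.inj h₁.symm (h ▸ h₁).symm

theorem _root_.PEquiv.ncard_preimage_image_some (f : α ≃. β) (t : Set β) :
    (f ⁻¹' (some '' t)).ncard = (t \ {b | f.symm b = none}).ncard := by
  rw [← (f.injOn_preimage_image_some t).ncard_image, image_preimage_eq_inter_range,
    ← Set.ncard_image_of_injective _ (Option.some_injective β)]
  congr 1
  ext (_ | b)
  · simp
  · simp [← f.eq_some_iff, Option.ne_none_iff_exists']

theorem _root_.PEquiv.ncard_setOf_trans_eq_none (f : α ≃. β) (g : β ≃. γ)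
    (hf : {a | f a = none}.Finite) (hg : {b | g b = none}.Finite) :
    {a | f.trans g a = none}.ncard =
      {a | f a = none}.ncard + ({b | g b = none} \ {b | f.symm b = none}).ncard := by
  have hS := (hg.image some).preimage (f.injOn_preimage_image_some _)
  rw [f.setOf_trans_eq_none g, Set.ncard_union_eq ?_ hf hS, f.ncard_preimage_image_some]
  refine Set.disjoint_left.2 ?_
  rintro a (ha : f a = none) ⟨b, -, hfa⟩
  simp [ha] at hfa

end PEquiv

namespace Icf

theorem compl_dom (f : Icf ι) : (dom f)ᶜ = {a | f.1 a = none} := by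
  ext a
  simp [dom]

theorem compl_ran (f : Icf ι) : (ran f)ᶜ = {b | f.1.symm b = none} := by
  ext b
  simp [ran]

theorem finite_compl_dom (f : Icf ι) : (dom f)ᶜ.Finite := f.compl_dom ▸ f.2.1

theorem finite_compl_ran (f : Icf ι) : (ran f)ᶜ.Finite := f.compl_ran ▸ f.2.2

theorem dbar_mul (f g : Icf ι) : dbar (f * g) = dbar f + (ran f \ dom g).ncard := by
  rw [dbar, dbar, compl_dom, compl_dom, ← compl_sdiff_compl, compl_dom, compl_ran]
  exact f.1.ncard_setOf_trans_eq_none g.1 f.2.1 g.2.1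

theorem rbar_mul (f g : Icf ι) : rbar (f * g) = rbar g + (dom g \ ran f).ncard := by
  rw [rbar, rbar, compl_ran, compl_ran, ← compl_sdiff_compl, compl_dom, compl_ran]
  rw [show (f * g).1.symm = g.1.symm.trans f.1.symm from PEquiv.symm_trans_rev _ _]
  simpa only [PEquiv.symm_symm] using g.1.symm.ncard_setOf_trans_eq_none f.1.symm g.2.2 f.2.2

end Icf

theorem statement15_general {ι : Type*} (α β : Icf ι) :
    (Icf.dbar (α * β) : ℤ) - (Icf.rbar (α * β) : ℤ) =
      ((Icf.dbar α : ℤ) - (Icf.rbar α : ℤ)) + ((Icf.dbar β : ℤ) - (Icf.rbar β : ℤ)) := by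
  have hdβ := ncard_inter_add_ncard_sdiff_eq_ncard (Icf.dom β)ᶜ (Icf.ran α)ᶜ β.finite_compl_dom
  have hrα := ncard_inter_add_ncard_sdiff_eq_ncard (Icf.ran α)ᶜ (Icf.dom β)ᶜ α.finite_compl_ran
  rw [compl_sdiff_compl] at hdβ hrα
  rw [inter_comm] at hrα
  rw [Icf.dbar_mul, Icf.rbar_mul]
  unfold Icf.dbar Icf.rbar
  omega

/-- `d̄(αβ) − r̄(αβ) = (d̄(α) − r̄(α)) + (d̄(β) − r̄(β))` in the integers. -/
theorem statement15 {ι : Type*} [Infinite ι] (α β : Icf ι) :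
    (Icf.dbar (α * β) : ℤ) - (Icf.rbar (α * β) : ℤ) =
      ((Icf.dbar α : ℤ) - (Icf.rbar α : ℤ)) + ((Icf.dbar β : ℤ) - (Icf.rbar β : ℤ)) :=
  statement15_general α β

end IcfPaper
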